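/- arXiv:1609.01402 — 2 statements merged into one kernel-verified Lean document; each statement's English description precedes it below -/
import Mathlib

section
/- For any finite simple graph G, cochord(G) ≤ β(G), where β(G) is the minimum matching number of G. (Explicitly: if {z_1,…,z_t} is a minimum maximal matching of G and Z_i is the subgraph of G whose edges are z_i together with all edges of G adjacent to z_i, then each Z_i is a co-chordal subgraph of G and E(G) = E(Z_1) ∪ … ∪ E(Z_t).) -/
/-!
Common definitions: edge ideals, Castelnuovo–Mumford regularity (via graded
free resolutions), chordal/co-chordal graphs, co-chordal cover number,
induced matchings, matchings, vertex covers, even-connections and the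
polarized colon graph.
-/

open MvPolynomial

namespace RegPowers

/-- The edge ideal `I(G)` of a finite simple graph `G`, inside `k[x_v : v ∈ V]`:
the ideal generated by the monomials `x_u * x_v` for edges `{u, v}` of `G`. -/
noncomputable def edgeIdeal (k : Type) [Field k] {V : Type} (G : SimpleGraph V) :
    Ideal (MvPolynomial V k) :=
  Ideal.span {m | ∃ u v : V, G.Adj u v ∧ m = X u * X v}

section Regularity

variable {k : Type} [Field k] {V : Type}

/-- A finite graded free resolution of a homogeneous ideal `I` of the polynomial
ring `k[x_v : v ∈ V]`:  free modules `F i = R^(rank i)` with generators of the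
internal degrees `deg i`, an augmentation `F 0 → I` given by homogeneous
generators `gen` of `I`, and graded (degree preserving) differentials
`d i : F (i+1) → F i` given by matrices with homogeneous entries, forming an
exact sequence `0 → F len → ⋯ → F 1 → F 0 → I → 0`. -/
structure GradedFreeResolution (I : Ideal (MvPolynomial V k)) where
  rank : ℕ → ℕ
  deg : (i : ℕ) → Fin (rank i) → ℕ
  len : ℕ
  rank_eq_zero : ∀ i : ℕ, len < i → rank i = 0
  gen : Fin (rank 0) → MvPolynomial V k
  gen_homog : ∀ l : Fin (rank 0), (gen l).IsHomogeneous (deg 0 l)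
  gen_span : Ideal.span (Set.range gen) = I
  d : (i : ℕ) → Matrix (Fin (rank i)) (Fin (rank (i + 1))) (MvPolynomial V k)
  d_homog : ∀ (i : ℕ) (a : Fin (rank i)) (b : Fin (rank (i + 1))),
    d i a b = 0 ∨ ∃ n : ℕ, (d i a b).IsHomogeneous n ∧ deg (i + 1) b = deg i a + n
  exact_zero :
    LinearMap.ker (Fintype.linearCombination (MvPolynomial V k) gen)
      = LinearMap.range (d 0).mulVecLin
  exact_succ : ∀ i : ℕ,
    LinearMap.ker (d i).mulVecLin = LinearMap.range (d (i + 1)).mulVecLin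

/-- The Castelnuovo–Mumford regularity of a homogeneous ideal `I` in a polynomial
ring over a field: the least `r` such that `I` admits a (finite) graded free
resolution whose `i`-th free module is generated in degrees `≤ r + i`.
(The minimal graded free resolution realizes this minimum, so this agrees with
the usual definition `reg I = max { j - i : Tor_i(I, k)_j ≠ 0 }`.) -/
noncomputable def reg (I : Ideal (MvPolynomial V k)) : ℕ :=
  sInf { r : ℕ | ∃ F : GradedFreeResolution I,
    ∀ (i : ℕ) (l : Fin (F.rank i)), F.deg i l ≤ r + i }

/-- A homogeneous ideal has a linear (minimal free) resolution iff it is generated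
in a single degree `d` and its Castelnuovo–Mumford regularity equals `d`. -/
def HasLinearResolution (I : Ideal (MvPolynomial V k)) : Prop :=
  ∃ d : ℕ, (∃ S : Set (MvPolynomial V k),
      (∀ f ∈ S, f.IsHomogeneous d) ∧ Ideal.span S = I) ∧ reg I = d

/-- A quadratic ideal has a linear presentation (i.e. its minimal free resolution
is 1-step linear): it is generated in degree 2 and admits a graded free resolution
whose zeroth free module is generated in degree `2` and whose first free module is
generated in degrees `≤ 3`. -/
def HasLinearPresentation (I : Ideal (MvPolynomial V k)) : Prop :=
  ∃ F : GradedFreeResolution I,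
    (∀ l : Fin (F.rank 0), F.deg 0 l = 2) ∧ (∀ l : Fin (F.rank 1), F.deg 1 l ≤ 3)

end Regularity

section Graphs

variable {V : Type}

/-- A graph is chordal if every induced cycle in it has length 3, i.e. it has no
induced cycle of length `≥ 4`. -/
def IsChordal (G : SimpleGraph V) : Prop :=
  ∀ n : ℕ, 4 ≤ n → IsEmpty (SimpleGraph.cycleGraph n ↪g G)

/-- The co-chordal cover number `cochord(G)`: the least `n` such that there are
`n` subgraphs `H 1, …, H n` of `G`, each with chordal complement, whose edge sets
cover the edge set of `G`. -/
noncomputable def cochord (G : SimpleGraph V) : ℕ :=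
  sInf { n : ℕ | ∃ H : Fin n → SimpleGraph V,
    (∀ i, H i ≤ G ∧ IsChordal (H i)ᶜ) ∧ (⨆ i, H i) = G }

/-- The data `(u i, v i)`, `i < n`, is an induced matching of `G` of size `n`:
the edges `{u i, v i}` are edges of `G`, pairwise vertex disjoint, and the
subgraph induced on their endpoints contains no other edges. -/
def IsInducedMatching (G : SimpleGraph V) {n : ℕ} (u v : Fin n → V) : Prop :=
  (∀ i, G.Adj (u i) (v i)) ∧
  ∀ i j, i ≠ j →
    (u i ≠ u j ∧ u i ≠ v j ∧ v i ≠ u j ∧ v i ≠ v j) ∧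
    (¬ G.Adj (u i) (u j) ∧ ¬ G.Adj (u i) (v j) ∧
      ¬ G.Adj (v i) (u j) ∧ ¬ G.Adj (v i) (v j))

/-- The induced matching number `ν(G)`: the maximum size of an induced matching. -/
noncomputable def inducedMatchingNumber (G : SimpleGraph V) : ℕ :=
  sSup { n : ℕ | ∃ u v : Fin n → V, IsInducedMatching G u v }

/-- `M` is a maximal matching of `G`: a set of pairwise disjoint edges of `G`
such that every edge of `G` meets an edge of `M`. -/
def IsMaximalMatching (G : SimpleGraph V) (M : Finset (Sym2 V)) : Prop :=
  (↑M ⊆ G.edgeSet) ∧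
  ((M : Set (Sym2 V)).Pairwise fun e f => ∀ x : V, x ∈ e → x ∉ f) ∧
  ∀ e ∈ G.edgeSet, ∃ f ∈ M, ∃ x : V, x ∈ e ∧ x ∈ f

/-- The minimum matching number `β(G)`: the least cardinality of a maximal
matching of `G`. -/
noncomputable def minMatchingNumber (G : SimpleGraph V) : ℕ :=
  sInf { n : ℕ | ∃ M : Finset (Sym2 V), IsMaximalMatching G M ∧ M.card = n }

/-- `(X, Y)` is a bipartition of `G`. -/
def IsBipartition (G : SimpleGraph V) (X Y : Finset V) : Prop :=
  Disjoint X Y ∧ (∀ v : V, v ∈ X ∨ v ∈ Y) ∧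
    ∀ u v : V, G.Adj u v → (u ∈ X ∧ v ∈ Y) ∨ (u ∈ Y ∧ v ∈ X)

/-- `G` is bipartite. -/
def IsBipartite (G : SimpleGraph V) : Prop :=
  ∃ X Y : Finset V, IsBipartition G X Y

/-- `C` is a vertex cover of `G`. -/
def IsVertexCover (G : SimpleGraph V) (C : Finset V) : Prop :=
  ∀ u v : V, G.Adj u v → u ∈ C ∨ v ∈ C

/-- `C` is a minimal vertex cover of `G`. -/
def IsMinimalVertexCover (G : SimpleGraph V) (C : Finset V) : Prop :=
  IsVertexCover G C ∧ ∀ C' ⊆ C, IsVertexCover G C' → C' = C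

/-- `G` is unmixed (well-covered): all minimal vertex covers have the same size. -/
def IsUnmixed (G : SimpleGraph V) : Prop :=
  ∀ C C' : Finset V, IsMinimalVertexCover G C → IsMinimalVertexCover G C' →
    C.card = C'.card

/-- `G` contains no induced path on `m` vertices. -/
def PathFree (m : ℕ) (G : SimpleGraph V) : Prop :=
  IsEmpty (SimpleGraph.pathGraph m ↪g G)

/-- `G` is weakly chordal: every induced cycle in `G` and in `Gᶜ` has length at
most 4. -/
def IsWeaklyChordal (G : SimpleGraph V) : Prop :=
  ∀ n : ℕ, 5 ≤ n →
    IsEmpty (SimpleGraph.cycleGraph n ↪g G) ∧ IsEmpty (SimpleGraph.cycleGraph n ↪g Gᶜ)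

/-- `G` is `nK₂`-free: it has no induced matching of size `n`. -/
def NK2Free (n : ℕ) (G : SimpleGraph V) : Prop :=
  ¬ ∃ u v : Fin n → V, IsInducedMatching G u v

/-- The whiskered graph `W(H)` of `H`: a pendant vertex is attached to every
vertex of `H` (the second copy of the vertex set consists of the pendant
vertices). -/
def whisker (H : SimpleGraph V) : SimpleGraph (V ⊕ V) :=
  SimpleGraph.fromRel fun a b =>
    match a, b with
    | Sum.inl u, Sum.inl v => H.Adj u v
    | Sum.inl u, Sum.inr v => u = v
    | _, _ => False

end Graphs

section EvenConnection

variable {V : Type} [DecidableEq V]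

/-- `u` and `v` (possibly equal) are even-connected in `G` with respect to the
`s`-fold product `e 0 ⋯ e (s-1)` of edges of `G`: there is a walk
`p 0, p 1, …, p (2m+1)` in `G` with `m ≥ 1` from `u` to `v` such that every
even-indexed edge `{p (2l+1), p (2l+2)}` is one of the `e i`, and each `e i` is
used at most as many times as it occurs in the list `e`. -/
def EvenConnected (G : SimpleGraph V) {s : ℕ} (e : Fin s → V × V) (u v : V) : Prop :=
  ∃ (m : ℕ) (p : ℕ → V), 1 ≤ m ∧ p 0 = u ∧ p (2 * m + 1) = v ∧
    (∀ r : ℕ, r < 2 * m + 1 → G.Adj (p r) (p (r + 1))) ∧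
    (∀ l : ℕ, l < m → ∃ i : Fin s,
      Sym2.mk (p (2 * l + 1)) (p (2 * l + 2)) = Sym2.mk (e i).1 (e i).2) ∧
    ∀ i : Fin s,
      ((Finset.range m).filter fun l =>
          Sym2.mk (p (2 * l + 1)) (p (2 * l + 2)) = Sym2.mk (e i).1 (e i).2).card ≤
        (Finset.univ.filter fun j : Fin s => Sym2.mk (e j).1 (e j).2 = Sym2.mk (e i).1 (e i).2).card

/-- The graph `G'` associated to the polarization of the colon ideal
`(I(G)^(s+1) : e 0 ⋯ e (s-1))` (by Banerjee's description of its quadratic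
generators): its edges are the edges of `G`, the pairs `{u, v}` of distinct
vertices that are even-connected with respect to `e 0 ⋯ e (s-1)`, and, for every
vertex `u` even-connected to itself, an edge from `u` to the new vertex `u'`
introduced by polarizing `x_u ^ 2`. -/
def polarGraph (G : SimpleGraph V) {s : ℕ} (e : Fin s → V × V) :
    SimpleGraph (V ⊕ V) :=
  SimpleGraph.fromRel fun a b =>
    match a, b with
    | Sum.inl u, Sum.inl v => G.Adj u v ∨ EvenConnected G e u v
    | Sum.inl u, Sum.inr v => u = v ∧ EvenConnected G e u u
    | _, _ => False

end EvenConnection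

end RegPowers

namespace RegPowers

/-- The subgraph `Z_e` of `G` whose edges are `e` together with all edges of `G`
adjacent to `e`. -/
def matchEdgeStar {V : Type} (G : SimpleGraph V) (e : Sym2 V) : SimpleGraph V :=
  SimpleGraph.fromRel fun u v => G.Adj u v ∧ (u ∈ e ∨ v ∈ e)

/-! The complement of `Z_{ab}` is a split graph: `{a, b}` is independent in it, because `ab`
is an edge of `Z_{ab}`, and every other pair of vertices is adjacent in it, because every
edge of `Z_{ab}` meets `a` or `b`. A split graph is chordal: on an induced cycle, of two
non-adjacent vertices at least one lies in the independent set, and of two adjacent ones at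
most one does, which is impossible on a cycle of length at least `4`. -/

open SimpleGraph

section SplitGraph

variable {V W : Type}

def IsSplitGraph (H : SimpleGraph V) : Prop :=
  ∃ I : Set V, H.IsIndepSet I ∧ H.IsClique Iᶜ

theorem IsSplitGraph.comap {H : SimpleGraph V} {H' : SimpleGraph W} (f : H ↪g H')
    (h : IsSplitGraph H') : IsSplitGraph H :=
  let ⟨I, hI, hK⟩ := h
  ⟨f ⁻¹' I, fun _ hx _ hy hxy hadj => hI hx hy (f.injective.ne hxy) (f.map_adj_iff.mpr hadj),
    fun _ hx _ hy hxy => f.map_adj_iff.mp (hK hx hy (f.injective.ne hxy))⟩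

theorem cycleGraph_adj_iff_of_lt {n : ℕ} {i j : Fin n} (h : i < j) :
    (cycleGraph n).Adj i j ↔ j.val = i.val + 1 ∨ (i.val = 0 ∧ j.val + 1 = n) := by
  rw [cycleGraph_adj', Fin.coe_sub_iff_lt.mpr h, Fin.coe_sub_iff_le.mpr h.le]
  omega

theorem not_isSplitGraph_cycleGraph {n : ℕ} (hn : 4 ≤ n) : ¬ IsSplitGraph (cycleGraph n) := by
  rintro ⟨I, hI, hK⟩
  let v (k : ℕ) (hk : k < n := by omega) : Fin n := ⟨k, hk⟩
  have adj (i j : ℕ) (hi : i < n) (hj : j < n) (hij : i < j) :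
      (cycleGraph n).Adj (v i) (v j) ↔ j = i + 1 ∨ (i = 0 ∧ j + 1 = n) :=
    cycleGraph_adj_iff_of_lt (i := v i) (j := v j) hij
  have not_both (i j : ℕ) (hi : i < n := by omega) (hj : j < n := by omega)
      (hij : i < j := by omega) (h : j = i + 1 ∨ (i = 0 ∧ j + 1 = n) := by omega) :
      v i ∉ I ∨ v j ∉ I := by
    by_contra! hc
    exact hI hc.1 hc.2 (by simp [v, Fin.ext_iff]; omega) ((adj i j hi hj hij).mpr h)
  have one_of (i j : ℕ) (hi : i < n := by omega) (hj : j < n := by omega)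
      (hij : i < j := by omega) (h : ¬ (j = i + 1 ∨ (i = 0 ∧ j + 1 = n)) := by omega) :
      v i ∈ I ∨ v j ∈ I := by
    by_contra! hc
    exact h ((adj i j hi hj hij).mp (hK hc.1 hc.2 (by simp [v, Fin.ext_iff]; omega)))
  have h0 : v 0 ∈ I := by
    have := not_both 1 2; have := not_both 2 3; have := one_of 0 2; have := one_of 1 3
    tauto
  have h1 : v 1 ∉ I := (not_both 0 1).resolve_left (not_not.mpr h0)
  have h3 : v 3 ∈ I := (one_of 1 3).resolve_left h1
  rcases hn.eq_or_lt with rfl | h5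
  · exact (not_both 0 3).elim (· h0) (· h3)
  · exact (not_both 3 4).elim (· h3) (· ((one_of 1 4).resolve_left h1))

theorem IsSplitGraph.isChordal {H : SimpleGraph V} (h : IsSplitGraph H) : IsChordal H :=
  fun _ hn => ⟨fun f => not_isSplitGraph_cycleGraph hn (h.comap f)⟩

end SplitGraph

section MatchEdgeStar

variable {V : Type} (G : SimpleGraph V)

theorem matchEdgeStar_adj {e : Sym2 V} {u v : V} :
    (matchEdgeStar G e).Adj u v ↔ G.Adj u v ∧ (u ∈ e ∨ v ∈ e) := by
  rw [matchEdgeStar, fromRel_adj]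
  constructor
  · rintro ⟨-, ⟨huv, h⟩ | ⟨hvu, h⟩⟩
    exacts [⟨huv, h⟩, ⟨hvu.symm, h.symm⟩]
  · rintro ⟨huv, h⟩
    exact ⟨huv.ne, Or.inl ⟨huv, h⟩⟩

theorem matchEdgeStar_le (e : Sym2 V) : matchEdgeStar G e ≤ G :=
  fun _ _ h => ((matchEdgeStar_adj G).mp h).1

theorem isSplitGraph_compl_matchEdgeStar {a b : V} (hab : G.Adj a b) :
    IsSplitGraph (matchEdgeStar G s(a, b))ᶜ := by
  refine ⟨{a, b}, ?_, ?_⟩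
  · rw [isIndepSet_compl, isClique_pair]
    exact fun _ => (matchEdgeStar_adj G).mpr ⟨hab, Or.inl (Sym2.mem_mk_left a b)⟩
  · rw [isClique_compl]
    intro u hu v hv _ huv
    simp_all [matchEdgeStar_adj]

theorem isChordal_compl_matchEdgeStar {e : Sym2 V} (he : e ∈ G.edgeSet) :
    IsChordal (matchEdgeStar G e)ᶜ := by
  induction e using Sym2.ind with
  | _ a b => exact (isSplitGraph_compl_matchEdgeStar G he).isChordal

theorem iSup_matchEdgeStar_eq {M : Finset (Sym2 V)}
    (hM : ∀ e ∈ G.edgeSet, ∃ f ∈ M, ∃ x : V, x ∈ e ∧ x ∈ f) :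
    ⨆ e ∈ M, matchEdgeStar G e = G := by
  refine le_antisymm (iSup₂_le fun e _ => matchEdgeStar_le G e) fun u v huv => ?_
  obtain ⟨f, hf, x, hxuv, hxf⟩ := hM s(u, v) huv
  simp only [iSup_adj, matchEdgeStar_adj]
  rcases Sym2.mem_iff.mp hxuv with rfl | rfl
  exacts [⟨f, hf, huv, Or.inl hxf⟩, ⟨f, hf, huv, Or.inr hxf⟩]

end MatchEdgeStar

theorem cochord_le_card {V ι : Type} [Fintype ι] (G : SimpleGraph V) (H : ι → SimpleGraph V)
    (hH : ∀ i, H i ≤ G ∧ IsChordal (H i)ᶜ) (hG : ⨆ i, H i = G) :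
    cochord G ≤ Fintype.card ι := by
  let σ := Fintype.equivFin ι
  refine Nat.sInf_le ⟨H ∘ σ.symm, fun i => hH _, ?_⟩
  rw [← hG, ← σ.symm.iSup_comp]
  rfl

theorem exists_isMaximalMatching {V : Type} [Finite V] (G : SimpleGraph V) :
    ∃ M : Finset (Sym2 V), IsMaximalMatching G M := by
  classical
  let IsMatching (M : Finset (Sym2 V)) : Prop :=
    ↑M ⊆ G.edgeSet ∧ (M : Set (Sym2 V)).Pairwise fun e f => ∀ x : V, x ∈ e → x ∉ f
  obtain ⟨M, hM, hmax⟩ :=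
    (Set.toFinite {M | IsMatching M}).exists_maximal ⟨∅, by simp [IsMatching]⟩
  refine ⟨M, hM.1, hM.2, fun e he => ?_⟩
  by_contra! hdisj
  have heM : e ∉ M := fun h => by
    induction e using Sym2.ind with
    | _ u v => exact hdisj _ h u (Sym2.mem_mk_left u v) (Sym2.mem_mk_left u v)
  have hins : IsMatching (insert e M) := by
    refine ⟨?_, ?_⟩
    · rw [Finset.coe_insert]
      exact Set.insert_subset he hM.1
    · rw [Finset.coe_insert, Set.pairwise_insert]
      exact ⟨hM.2, fun f hf _ => ⟨hdisj f hf, fun x hxf hxe => hdisj f hf x hxe hxf⟩⟩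
  exact heM (hmax hins (Finset.subset_insert e M) (Finset.mem_insert_self e M))

theorem exists_isMaximalMatching_card_eq {V : Type} [Finite V] (G : SimpleGraph V) :
    ∃ M : Finset (Sym2 V), IsMaximalMatching G M ∧ M.card = minMatchingNumber G := by
  obtain ⟨M, hM⟩ := exists_isMaximalMatching G
  exact Nat.sInf_mem (s := {n | ∃ M, IsMaximalMatching G M ∧ M.card = n}) ⟨M.card, M, hM, rfl⟩

theorem cochord_le_minMatchingNumber_general {V : Type} [Fintype V]
    (G : SimpleGraph V) :
    cochord G ≤ minMatchingNumber G ∧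
    ∀ M : Finset (Sym2 V), IsMaximalMatching G M →
      (∀ e ∈ M, matchEdgeStar G e ≤ G ∧ IsChordal (matchEdgeStar G e)ᶜ) ∧
      (⨆ e ∈ M, matchEdgeStar G e) = G := by
  have hstar (M : Finset (Sym2 V)) (hM : IsMaximalMatching G M) :
      ∀ e ∈ M, matchEdgeStar G e ≤ G ∧ IsChordal (matchEdgeStar G e)ᶜ :=
    fun e he => ⟨matchEdgeStar_le G e, isChordal_compl_matchEdgeStar G (hM.1 he)⟩
  refine ⟨?_, fun M hM => ⟨hstar M hM, iSup_matchEdgeStar_eq G hM.2.2⟩⟩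
  obtain ⟨M, hM, hcard⟩ := exists_isMaximalMatching_card_eq G
  calc cochord G ≤ Fintype.card M :=
        cochord_le_card G (fun e : M => matchEdgeStar G e) (fun e => hstar M hM e e.2)
          (iSup_subtype'.symm.trans (iSup_matchEdgeStar_eq G hM.2.2))
    _ = minMatchingNumber G := by rw [Fintype.card_coe, hcard]

/-- For any finite simple graph `G`, `cochord(G) ≤ β(G)`, the
minimum matching number of `G`.  Explicitly: if `M` is a maximal matching of `G`
and, for `e ∈ M`, `Z_e` is the subgraph of `G` whose edges are `e` together with
all edges of `G` adjacent to `e`, then each `Z_e` is a co-chordal subgraph of `G`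
and the edge sets of the `Z_e` cover the edge set of `G`. -/
theorem cochord_le_minMatchingNumber {V : Type} [Fintype V] [DecidableEq V]
    (G : SimpleGraph V) :
    cochord G ≤ minMatchingNumber G ∧
    ∀ M : Finset (Sym2 V), IsMaximalMatching G M →
      (∀ e ∈ M, matchEdgeStar G e ≤ G ∧ IsChordal (matchEdgeStar G e)ᶜ) ∧
      (⨆ e ∈ M, matchEdgeStar G e) = G :=
  cochord_le_minMatchingNumber_general G

end RegPowers
end

section
/- If G is an unmixed bipartite graph, then for every s ≥ 1 and every s-fold product e_1⋯e_s of edges of G (not necessarily distinct), the graph G' associated to the colon ideal (I(G)^{s+1} : e_1⋯e_s) is also an unmixed bipartite graph. -/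
/-!
Common definitions: edge ideals, Castelnuovo–Mumford regularity (via graded
free resolutions), chordal/co-chordal graphs, co-chordal cover number,
induced matchings, matchings, vertex covers, even-connections and the
polarized colon graph.
-/

open MvPolynomial

/-!
Let `(X, Y)` be a bipartition of `G`. Since `G` is unmixed, Hall's theorem matches the
non-isolated vertices `N` of `X` perfectly with those of `Y` by `a ↦ μ a`, and by Villarreal's
criterion `G` is unmixed iff `a — μ b` and `b — μ c` force `a — μ c`; so `a ≼ b :↔ a — μ b` is a
preorder on `N`, and every edge of `G` is some `a — μ b` with `a ≼ b`.

By Banerjee's description, `u — v` is an edge of `G'` iff `x_u x_v e₁⋯e_s` is a product of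
`s + 1` edges. Counting endpoints in `X` shows that `G'` has the bipartition `(X, Y)`, and `G'`
contains `G`, so it has the same matching. By Hall's theorem for the preorder `≼`, a monomial
`∏ x_{a_i} x_{μ b_i}` is a product of edges iff every up-set `U` of `N` contains at most as many
`a_i` as `b_i`; for the monomials `x_a x_{μ b} e₁⋯e_s` this condition is transitive in `(a, b)`,
so `G'` satisfies Villarreal's criterion too.
-/

namespace RegPowers

open Finset

def IsUpClosed {α : Type*} (r : α → α → Prop) (s U : Finset α) : Prop :=
  U ⊆ s ∧ ∀ p ∈ U, ∀ q ∈ s, r p q → q ∈ U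

/-- Hall's theorem for a preorder: Hall's condition for a set `S` of indices is the hypothesis
applied to the up-set generated by `f '' S`. -/
theorem exists_perm_forall_rel_of_card_le {ι α : Type*} [Fintype ι] [DecidableEq α]
    {r : α → α → Prop} {s : Finset α} (hrefl : ∀ a ∈ s, r a a)
    (htrans : ∀ a ∈ s, ∀ b ∈ s, ∀ c ∈ s, r a b → r b c → r a c)
    {f g : ι → α} (hf : ∀ i, f i ∈ s) (hg : ∀ i, g i ∈ s)
    (hcard : ∀ U, IsUpClosed r s U → #{i | f i ∈ U} ≤ #{i | g i ∈ U}) :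
    ∃ σ : Equiv.Perm ι, ∀ i, r (f i) (g (σ i)) := by
  classical
  have hall : ∀ S : Finset ι, #S ≤ #(S.biUnion fun i => {j | r (f i) (g j)}) := by
    intro S
    let U : Finset α := {q ∈ s | ∃ i ∈ S, r (f i) q}
    have hU : IsUpClosed r s U := ⟨filter_subset _ _, fun p hp q hq hpq => by
      obtain ⟨hp, i, hi, hip⟩ := mem_filter.1 hp
      exact mem_filter.2 ⟨hq, i, hi, htrans _ (hf i) _ hp _ hq hip hpq⟩⟩
    calc #S ≤ #{i | f i ∈ U} := card_le_card fun i hi =>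
          mem_filter.2 ⟨mem_univ _, mem_filter.2 ⟨hf i, i, hi, hrefl _ (hf i)⟩⟩
      _ ≤ #{i | g i ∈ U} := hcard U hU
      _ = #(S.biUnion fun i => {j | r (f i) (g j)}) := by
          congr 1
          ext j
          simp [U, hg j]
  obtain ⟨σ, hσ, hσr⟩ := (all_card_le_biUnion_card_iff_exists_injective _).1 hall
  exact ⟨Equiv.ofBijective σ (Finite.injective_iff_bijective.1 hσ),
    fun i => by simpa using hσr i⟩

section ExponentVectors

variable {V : Type}

/-- Monomials are handled through their exponent vectors; this is the one of `x_u x_v`. -/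
noncomputable def edgeExp (u v : V) : V →₀ ℕ := Finsupp.single u 1 + Finsupp.single v 1

def IsEdgeProduct (G : SimpleGraph V) (n : ℕ) (d : V →₀ ℕ) : Prop :=
  ∃ E : Fin n → V × V, (∀ i, G.Adj (E i).1 (E i).2) ∧ d = ∑ i, edgeExp (E i).1 (E i).2

variable {G : SimpleGraph V} {n : ℕ} {d : V →₀ ℕ}

theorem edgeExp_comm (u v : V) : edgeExp u v = edgeExp v u := add_comm _ _

@[simp]
theorem degree_edgeExp (u v : V) : (edgeExp u v).degree = 2 := by
  simp [edgeExp]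

theorem eq_of_le_of_degree_le {d' : V →₀ ℕ} (hle : d' ≤ d) (hdeg : d.degree ≤ d'.degree) :
    d' = d := by
  have hsplit : d'.degree + (d - d').degree = d.degree := by
    rw [← map_add, add_tsub_cancel_of_le hle]
  have hzero : (d - d').degree = 0 := by omega
  rw [Finsupp.degree_eq_zero_iff, tsub_eq_zero_iff_le] at hzero
  exact le_antisymm hle hzero

theorem IsEdgeProduct.degree_eq (hd : IsEdgeProduct G n d) : d.degree = 2 * n := by
  obtain ⟨E, -, rfl⟩ := hd
  simp [mul_comm]

theorem IsEdgeProduct.cons {u v : V} (huv : G.Adj u v) (hd : IsEdgeProduct G n d) :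
    IsEdgeProduct G (n + 1) (edgeExp u v + d) := by
  obtain ⟨E, hE, rfl⟩ := hd
  exact ⟨Fin.cons (u, v) E, Fin.forall_fin_succ.2 ⟨huv, hE⟩, by simp [Fin.sum_univ_succ]⟩

theorem isEdgeProduct_zero_iff : IsEdgeProduct G 0 d ↔ d = 0 := by
  simp [IsEdgeProduct]

theorem isEdgeProduct_succ_iff :
    IsEdgeProduct G (n + 1) d ↔
      ∃ u v d', G.Adj u v ∧ IsEdgeProduct G n d' ∧ d = edgeExp u v + d' := by
  refine ⟨?_, fun ⟨u, v, d', huv, hd', hd⟩ => hd ▸ hd'.cons huv⟩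
  rintro ⟨E, hE, rfl⟩
  exact ⟨(E 0).1, (E 0).2, _, hE 0, ⟨Fin.tail E, fun i => hE i.succ, rfl⟩,
    Fin.sum_univ_succ _⟩

theorem IsEdgeProduct.mem_support (hd : IsEdgeProduct G n d) {u : V} (hu : d u ≠ 0) :
    u ∈ G.support := by
  classical
  obtain ⟨E, hE, rfl⟩ := hd
  rw [Finsupp.finsetSum_apply] at hu
  obtain ⟨i, -, hi⟩ := exists_ne_zero_of_sum_ne_zero hu
  simp only [edgeExp, Finsupp.add_apply, Finsupp.single_apply] at hi
  by_cases h₁ : (E i).1 = u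
  · exact ⟨_, h₁ ▸ hE i⟩
  · by_cases h₂ : (E i).2 = u
    · exact ⟨_, h₂ ▸ (hE i).symm⟩
    · simp [h₁, h₂] at hi

noncomputable def countIn (U : Finset V) : (V →₀ ℕ) →+ ℕ :=
  ∑ a ∈ U, Finsupp.applyAddHom a

theorem countIn_edgeExp [DecidableEq V] (U : Finset V) (u v : V) :
    countIn U (edgeExp u v) = (if u ∈ U then 1 else 0) + (if v ∈ U then 1 else 0) := by
  simp [countIn, edgeExp, Finsupp.single_apply, sum_add_distrib]

end ExponentVectors

section MonomialIdeals

variable {V : Type}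

theorem X_mul_X_eq_monomial {R : Type*} [CommSemiring R] (u v : V) :
    (X u * X v : MvPolynomial V R) = monomial (edgeExp u v) 1 := by
  rw [X, X, monomial_mul, one_mul]
  rfl

theorem prod_X_mul_X_eq_monomial {R : Type*} [CommSemiring R] {ι : Type*} [Fintype ι]
    (e : ι → V × V) :
    ∏ i, (X (e i).1 * X (e i).2 : MvPolynomial V R) =
      monomial (∑ i, edgeExp (e i).1 (e i).2) 1 := by
  simp only [X_mul_X_eq_monomial, monomial_sum_one]

theorem monomial_one_mem_span_monomial_image_iff {R : Type*} [CommSemiring R] [Nontrivial R]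
    {T : Set (V →₀ ℕ)} {d : V →₀ ℕ} :
    monomial d (1 : R) ∈ Ideal.span ((fun d => monomial d (1 : R)) '' T) ↔
      ∃ d' ∈ T, d' ≤ d := by
  classical
  rw [mem_ideal_span_monomial_image, support_monomial, if_neg one_ne_zero]
  simp

variable (k : Type) [Field k] {G : SimpleGraph V}

theorem edgeIdeal_pow_eq_span (n : ℕ) :
    edgeIdeal k G ^ n =
      Ideal.span ((fun d => monomial d (1 : k)) '' {d | IsEdgeProduct G n d}) := by
  induction n with
  | zero => simp [isEdgeProduct_zero_iff, Ideal.one_eq_top]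
  | succ n ih =>
    rw [pow_succ', ih, edgeIdeal, Ideal.span_mul_span']
    congr 1
    ext p
    simp only [Set.mem_mul, Set.mem_ofPred_eq, Set.mem_image, isEdgeProduct_succ_iff]
    constructor
    · rintro ⟨_, ⟨u, v, huv, rfl⟩, _, ⟨d', hd', rfl⟩, rfl⟩
      exact ⟨_, ⟨u, v, d', huv, hd', rfl⟩,
        by rw [X_mul_X_eq_monomial, monomial_mul, one_mul]⟩
    · rintro ⟨_, ⟨u, v, d', huv, hd', rfl⟩, rfl⟩
      exact ⟨_, ⟨u, v, huv, rfl⟩, _, ⟨d', hd', rfl⟩,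
        by rw [X_mul_X_eq_monomial, monomial_mul, one_mul]⟩

theorem X_mul_X_mem_edgeIdeal_iff {u v : V} : X u * X v ∈ edgeIdeal k G ↔ G.Adj u v := by
  refine ⟨fun h => ?_, fun h => Ideal.subset_span ⟨u, v, h, rfl⟩⟩
  rw [← pow_one (edgeIdeal k G), edgeIdeal_pow_eq_span, X_mul_X_eq_monomial,
    monomial_one_mem_span_monomial_image_iff] at h
  obtain ⟨d', hd', hle⟩ := h
  obtain ⟨a, b, d'', hab, hd'', rfl⟩ := isEdgeProduct_succ_iff.1 hd'
  rw [isEdgeProduct_zero_iff.1 hd'', add_zero] at hle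
  have heq := eq_of_le_of_degree_le hle (by simp)
  rw [edgeExp, edgeExp, Finsupp.single_add_single_eq_single_add_single one_ne_zero one_ne_zero]
    at heq
  rcases heq with ⟨rfl, rfl⟩ | ⟨-, rfl, rfl⟩ | ⟨h, -⟩
  · exact hab
  · exact hab.symm
  · simp at h

theorem adj_iff_isEdgeProduct_of_edgeIdeal_eq_colon {G' : SimpleGraph V} {s : ℕ}
    {d₀ : V →₀ ℕ} (hd₀ : d₀.degree = 2 * s)
    (hG' : edgeIdeal k G' =
      Submodule.colon (edgeIdeal k G ^ (s + 1)) (Ideal.span {monomial d₀ (1 : k)}))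
    (u v : V) : G'.Adj u v ↔ IsEdgeProduct G (s + 1) (edgeExp u v + d₀) := by
  rw [← X_mul_X_mem_edgeIdeal_iff k, hG', Ideal.mem_colon_span_singleton, X_mul_X_eq_monomial,
    monomial_mul, one_mul, edgeIdeal_pow_eq_span, monomial_one_mem_span_monomial_image_iff]
  refine ⟨fun ⟨d', hd', hle⟩ => ?_, fun h => ⟨_, h, le_rfl⟩⟩
  rwa [← eq_of_le_of_degree_le hle (by rw [hd'.degree_eq, map_add, degree_edgeExp, hd₀]; omega)]

end MonomialIdeals

section VertexCovers

variable {V : Type} {G : SimpleGraph V}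

theorem IsMinimalVertexCover.exists_adj_notMem {C : Finset V} (hC : IsMinimalVertexCover G C)
    {v : V} (hv : v ∈ C) : ∃ w, G.Adj v w ∧ w ∉ C := by
  classical
  by_contra! hno
  have hcov : IsVertexCover G (C.erase v) := by
    intro a b hab
    rcases hC.1 a b hab with ha | hb
    · by_cases hav : a = v
      · subst hav
        exact Or.inr (mem_erase.2 ⟨hab.ne.symm, hno b hab⟩)
      · exact Or.inl (mem_erase.2 ⟨hav, ha⟩)
    · by_cases hbv : b = v
      · subst hbv
        exact Or.inl (mem_erase.2 ⟨hab.ne, hno a hab.symm⟩)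
      · exact Or.inr (mem_erase.2 ⟨hbv, hb⟩)
  exact notMem_erase v C (by rw [hC.2 _ (erase_subset v C) hcov]; exact hv)

theorem exists_isMinimalVertexCover_subset {C : Finset V} (hC : IsVertexCover G C) :
    ∃ C' ⊆ C, IsMinimalVertexCover G C' := by
  induction C using Finset.strongInduction with
  | _ C ih =>
    by_cases hmin : ∀ C' ⊆ C, IsVertexCover G C' → C' = C
    · exact ⟨C, Subset.rfl, hC, hmin⟩
    · push Not at hmin
      obtain ⟨C', hsub, hcov, hne⟩ := hmin
      obtain ⟨C'', hsub', hmin'⟩ := ih C' (Finset.ssubset_iff_subset_ne.2 ⟨hsub, hne⟩) hcov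
      exact ⟨C'', hsub'.trans hsub, hmin'⟩

theorem isVertexCover_erase_erase [DecidableEq V] {S : Finset V}
    (hS : ∀ u ∈ G.support, u ∈ S) {x y : V} (hxy : ¬ G.Adj x y) :
    IsVertexCover G ((S.erase x).erase y) := by
  intro u v huv
  have hu := hS u ⟨v, huv⟩
  have hv := hS v ⟨u, huv.symm⟩
  by_contra! h
  simp only [mem_erase] at h
  have hu' : u = x ∨ u = y := by tauto
  have hv' : v = x ∨ v = y := by tauto
  rcases hu' with rfl | rfl <;> rcases hv' with rfl | rfl
  exacts [huv.ne rfl, hxy huv, hxy huv.symm, huv.ne rfl]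

end VertexCovers

section Bipartite

variable {V : Type} {G H : SimpleGraph V} {X Y : Finset V}

theorem IsBipartition.symm (h : IsBipartition G X Y) : IsBipartition G Y X :=
  ⟨h.1.symm, fun v => (h.2.1 v).symm, fun u v huv => (h.2.2 u v huv).symm⟩

theorem IsBipartition.countIn_edgeExp_of_adj (h : IsBipartition G X Y) {u v : V}
    (huv : G.Adj u v) : countIn X (edgeExp u v) = 1 := by
  classical
  rw [countIn_edgeExp]
  rcases h.2.2 u v huv with ⟨hu, hv⟩ | ⟨hu, hv⟩
  · simp [hu, disjoint_right.1 h.1 hv]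
  · simp [hv, disjoint_right.1 h.1 hu]

theorem IsBipartition.countIn_of_isEdgeProduct (h : IsBipartition G X Y) {n : ℕ}
    {d : V →₀ ℕ} (hd : IsEdgeProduct G n d) : countIn X d = n := by
  obtain ⟨E, hE, rfl⟩ := hd
  simp [h.countIn_edgeExp_of_adj (hE _)]

/-- Each of the `s + 1` edges has exactly one endpoint in `X`, and so do the `s` edges of `d₀`. -/
theorem IsBipartition.of_isEdgeProduct_add (h : IsBipartition G X Y) {s : ℕ} {d₀ : V →₀ ℕ}
    (hd₀ : IsEdgeProduct G s d₀)
    (hH : ∀ u v, H.Adj u v → IsEdgeProduct G (s + 1) (edgeExp u v + d₀)) :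
    IsBipartition H X Y := by
  classical
  refine ⟨h.1, h.2.1, fun u v huv => ?_⟩
  have hcount := h.countIn_of_isEdgeProduct (hH u v huv)
  rw [map_add, h.countIn_of_isEdgeProduct hd₀, countIn_edgeExp] at hcount
  have hY : ∀ w, w ∉ X → w ∈ Y := fun w hw => (h.2.1 w).resolve_left hw
  by_cases hu : u ∈ X <;> by_cases hv : v ∈ X <;>
    simp only [hu, hv, if_true, if_false] at hcount
  · omega
  · exact Or.inl ⟨hu, hY v hv⟩
  · exact Or.inr ⟨hY u hu, hv⟩
  · omega

open Classical in
noncomputable def nonIsolated (G : SimpleGraph V) (X : Finset V) : Finset V :=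
  X.filter (· ∈ G.support)

theorem mem_nonIsolated {a : V} : a ∈ nonIsolated G X ↔ a ∈ X ∧ a ∈ G.support := by
  simp [nonIsolated]

theorem IsBipartition.isMinimalVertexCover_nonIsolated (h : IsBipartition G X Y) :
    IsMinimalVertexCover G (nonIsolated G X) := by
  refine ⟨fun u v huv => ?_, fun C hC hcov => hC.antisymm fun a ha => ?_⟩
  · rcases h.2.2 u v huv with ⟨hu, -⟩ | ⟨-, hv⟩
    · exact Or.inl (mem_nonIsolated.2 ⟨hu, v, huv⟩)
    · exact Or.inr (mem_nonIsolated.2 ⟨hv, u, huv.symm⟩)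
  · obtain ⟨haX, b, hab⟩ := mem_nonIsolated.1 ha
    refine (hcov a b hab).resolve_right fun hb => ?_
    have hbX := (mem_nonIsolated.1 (hC hb)).1
    rcases h.2.2 a b hab with ⟨-, hbY⟩ | ⟨haY, -⟩
    exacts [disjoint_left.1 h.1 hbX hbY, disjoint_left.1 h.1 haX haY]

/-- The cover `(nonIsolated G X \ S) ∪ T` is compared with the minimal cover `nonIsolated G X`. -/
theorem IsBipartition.card_le_of_forall_adj_mem (h : IsBipartition G X Y) (hunm : IsUnmixed G)
    {S T : Finset V} (hS : S ⊆ nonIsolated G X) (hT : ∀ a ∈ S, ∀ b, G.Adj a b → b ∈ T) :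
    #S ≤ #T := by
  classical
  have hcov : IsVertexCover G ((nonIsolated G X \ S) ∪ T) := by
    intro u v huv
    rcases h.2.2 u v huv with ⟨hu, -⟩ | ⟨-, hv⟩
    · by_cases huS : u ∈ S
      · exact Or.inr (mem_union_right _ (hT u huS v huv))
      · exact Or.inl (mem_union_left _ (mem_sdiff.2 ⟨mem_nonIsolated.2 ⟨hu, v, huv⟩, huS⟩))
    · by_cases hvS : v ∈ S
      · exact Or.inl (mem_union_right _ (hT v hvS u huv.symm))
      · exact Or.inr (mem_union_left _
          (mem_sdiff.2 ⟨mem_nonIsolated.2 ⟨hv, u, huv.symm⟩, hvS⟩))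
  obtain ⟨C, hCsub, hC⟩ := exists_isMinimalVertexCover_subset hcov
  have h₁ := hunm _ _ h.isMinimalVertexCover_nonIsolated hC
  have h₂ := card_le_card hCsub
  have h₃ := card_union_le (nonIsolated G X \ S) T
  have h₄ := card_sdiff_of_subset hS
  have h₅ := card_le_card hS
  omega

end Bipartite

section MatchedBipartite

variable {V : Type} [DecidableEq V] {G H : SimpleGraph V} {N : Finset V} {μ : V → V}

/-- `G` is bipartite with parts `N` and `μ '' N` (isolated vertices aside), and the edges
`a — μ a`, `a ∈ N`, form a perfect matching. -/
structure IsMatchedBipartite (G : SimpleGraph V) (N : Finset V) (μ : V → V) : Prop where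
  injOn : Set.InjOn μ N
  disjoint : Disjoint N (N.image μ)
  adj_apply : ∀ a ∈ N, G.Adj a (μ a)
  adj_cases : ∀ u v, G.Adj u v →
    (u ∈ N ∧ v ∈ N.image μ) ∨ (u ∈ N.image μ ∧ v ∈ N)

/-- Villarreal's condition: `a — μ b` and `b — μ c` force `a — μ c`. -/
def IsMatchingTransitive (G : SimpleGraph V) (N : Finset V) (μ : V → V) : Prop :=
  ∀ a ∈ N, ∀ b ∈ N, ∀ c ∈ N, G.Adj a (μ b) → G.Adj b (μ c) → G.Adj a (μ c)

/-- Hall's theorem gives a matching of `nonIsolated G X` into `nonIsolated G Y`, which is onto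
because unmixedness makes both sides minimal vertex covers of the same size. -/
theorem IsBipartition.exists_isMatchedBipartite {X Y : Finset V} (h : IsBipartition G X Y)
    (hunm : IsUnmixed G) : ∃ μ, IsMatchedBipartite G (nonIsolated G X) μ := by
  classical
  set NX := nonIsolated G X
  set NY := nonIsolated G Y
  have hall : ∀ S : Finset NX, #S ≤ #(S.biUnion fun a => NY.filter (G.Adj a)) := by
    intro S
    rw [← card_map (Function.Embedding.subtype _)]
    refine h.card_le_of_forall_adj_mem hunm (fun a ha => ?_) fun a ha b hab => ?_
    · obtain ⟨a, -, rfl⟩ := mem_map.1 ha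
      exact a.2
    · obtain ⟨a, haS, rfl⟩ := mem_map.1 ha
      have hbY : b ∈ Y := ((h.2.2 _ b hab).resolve_right fun h' =>
        disjoint_left.1 h.1 (mem_nonIsolated.1 a.2).1 h'.1).2
      exact mem_biUnion.2
        ⟨a, haS, mem_filter.2 ⟨mem_nonIsolated.2 ⟨hbY, a, hab.symm⟩, hab⟩⟩
  obtain ⟨g, hg, hgN⟩ := (all_card_le_biUnion_card_iff_exists_injective _).1 hall
  set μ : V → V := fun a => if ha : a ∈ NX then g ⟨a, ha⟩ else a
  have hμg : ∀ a (ha : a ∈ NX), μ a = g ⟨a, ha⟩ := fun a ha => dif_pos ha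
  have hμ : ∀ a ∈ NX, G.Adj a (μ a) ∧ μ a ∈ NY := fun a ha => by
    simpa [hμg a ha, and_comm] using hgN ⟨a, ha⟩
  have hinj : Set.InjOn μ NX := fun a ha b hb hab => by
    rw [hμg a ha, hμg b hb] at hab
    exact congrArg Subtype.val (hg hab)
  have himage : NX.image μ = NY := by
    refine eq_of_subset_of_card_le (fun w hw => ?_) ?_
    · obtain ⟨a, ha, rfl⟩ := mem_image.1 hw
      exact (hμ a ha).2
    · rw [card_image_of_injOn hinj, hunm _ _ h.symm.isMinimalVertexCover_nonIsolated
        h.isMinimalVertexCover_nonIsolated]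
  refine ⟨μ, hinj, ?_, fun a ha => (hμ a ha).1, fun u v huv => ?_⟩
  · rw [himage]
    exact disjoint_of_subset_left (filter_subset _ _)
      (disjoint_of_subset_right (filter_subset _ _) h.1)
  · rw [himage]
    rcases h.2.2 u v huv with ⟨hu, hv⟩ | ⟨hu, hv⟩
    · exact Or.inl
        ⟨mem_nonIsolated.2 ⟨hu, v, huv⟩, mem_nonIsolated.2 ⟨hv, u, huv.symm⟩⟩
    · exact Or.inr
        ⟨mem_nonIsolated.2 ⟨hu, v, huv⟩, mem_nonIsolated.2 ⟨hv, u, huv.symm⟩⟩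

namespace IsMatchedBipartite

variable (h : IsMatchedBipartite G N μ)
include h

theorem apply_notMem {a : V} (ha : a ∈ N) : μ a ∉ N :=
  fun hμ => disjoint_left.1 h.disjoint hμ (mem_image_of_mem μ ha)

theorem apply_mem_image_iff {U : Finset V} (hU : U ⊆ N) {a : V} (ha : a ∈ N) :
    μ a ∈ U.image μ ↔ a ∈ U := by
  refine ⟨fun hμ => ?_, mem_image_of_mem μ⟩
  obtain ⟨b, hb, hba⟩ := mem_image.1 hμ
  exact h.injOn (hU hb) ha hba ▸ hb

theorem mem_union_of_mem_support {u : V} (hu : u ∈ G.support) : u ∈ N ∪ N.image μ := by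
  obtain ⟨v, huv⟩ := hu
  rcases h.adj_cases u v huv with ⟨hu, -⟩ | ⟨hu, -⟩ <;> simp [hu]

theorem exists_apply_eq_of_adj {a w : V} (ha : a ∈ N) (haw : G.Adj a w) :
    ∃ q ∈ N, μ q = w := by
  rcases h.adj_cases a w haw with ⟨-, hw⟩ | ⟨ha', -⟩
  · simpa using hw
  · exact absurd ha' (disjoint_left.1 h.disjoint ha)

theorem mem_of_adj_apply {a w : V} (ha : a ∈ N) (haw : G.Adj (μ a) w) : w ∈ N := by
  rcases h.adj_cases _ w haw with ⟨hμ, -⟩ | ⟨-, hw⟩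
  exacts [absurd hμ (h.apply_notMem ha), hw]

theorem exists_edgeExp_eq {u v : V} (huv : G.Adj u v) :
    ∃ p ∈ N, ∃ q ∈ N, G.Adj p (μ q) ∧ edgeExp u v = edgeExp p (μ q) := by
  rcases h.adj_cases u v huv with ⟨hu, -⟩ | ⟨-, hv⟩
  · obtain ⟨q, hq, rfl⟩ := h.exists_apply_eq_of_adj hu huv
    exact ⟨u, hu, q, hq, huv, rfl⟩
  · obtain ⟨q, hq, rfl⟩ := h.exists_apply_eq_of_adj hv huv.symm
    exact ⟨v, hv, q, hq, huv.symm, edgeExp_comm _ _⟩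

theorem isMinimalVertexCover : IsMinimalVertexCover G N := by
  refine ⟨fun u v huv => ?_, fun C hC hcov => hC.antisymm fun a ha => ?_⟩
  · rcases h.adj_cases u v huv with ⟨hu, -⟩ | ⟨-, hv⟩
    exacts [Or.inl hu, Or.inr hv]
  · exact (hcov a (μ a) (h.adj_apply a ha)).resolve_right fun hμ => h.apply_notMem ha (hC hμ)

theorem card_eq_card_add_card_filter {D : Finset V} (hD : D ⊆ N ∪ N.image μ)
    (hhit : ∀ a ∈ N, a ∈ D ∨ μ a ∈ D) :
    #D = #N + #{a ∈ N | a ∈ D ∧ μ a ∈ D} := by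
  have hsplit : #D = #{a ∈ N | a ∈ D} + #{a ∈ N | μ a ∈ D} := by
    rw [← card_filter_add_card_filter_not (· ∈ N),
      ← card_image_of_injOn (h.injOn.mono (filter_subset (μ · ∈ D) N))]
    congr 2
    · ext w
      simp only [mem_filter]
      tauto
    · ext w
      simp only [mem_filter, mem_image]
      constructor
      · rintro ⟨hwD, hwN⟩
        obtain ⟨a, ha, rfl⟩ := mem_image.1 ((mem_union.1 (hD hwD)).resolve_left hwN)
        exact ⟨a, ⟨ha, hwD⟩, rfl⟩
      · rintro ⟨a, ⟨ha, hμa⟩, rfl⟩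
        exact ⟨hμa, h.apply_notMem ha⟩
  rw [hsplit, ← card_union_add_card_inter, ← filter_or, ← filter_and, filter_true_of_mem hhit]

theorem card_eq_iff {D : Finset V} (hD : D ⊆ N ∪ N.image μ)
    (hhit : ∀ a ∈ N, a ∈ D ∨ μ a ∈ D) :
    #D = #N ↔ ∀ a ∈ N, ¬(a ∈ D ∧ μ a ∈ D) := by
  rw [h.card_eq_card_add_card_filter hD hhit, Nat.add_eq_left, card_eq_zero, filter_eq_empty_iff]

/-- Without the edge `a — μ c`, the non-isolated vertices other than `a` and `μ c` form a vertex
cover; a minimal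
one inside it meets each matching edge once, so it avoids `b` since it must contain `μ b`, and
then it misses the edge `b — μ c`. -/
theorem adj_trans_of_isUnmixed (hunm : IsUnmixed G) {a b c : V} (hb : b ∈ N)
    (hab : G.Adj a (μ b)) (hbc : G.Adj b (μ c)) : G.Adj a (μ c) := by
  by_contra hac
  obtain ⟨C, hCsub, hC⟩ := exists_isMinimalVertexCover_subset
    (isVertexCover_erase_erase (fun u hu => h.mem_union_of_mem_support hu) hac)
  have hhit : ∀ t ∈ N, t ∈ C ∨ μ t ∈ C := fun t ht => hC.1 t (μ t) (h.adj_apply t ht)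
  have hCN : C ⊆ N ∪ N.image μ := hCsub.trans ((erase_subset _ _).trans (erase_subset _ _))
  have hnot := (h.card_eq_iff hCN hhit).1 (hunm _ _ hC h.isMinimalVertexCover)
  have haC : a ∉ C := fun haC => (mem_erase.1 (mem_erase.1 (hCsub haC)).2).1 rfl
  have hμcC : μ c ∉ C := fun hμcC => (mem_erase.1 (hCsub hμcC)).1 rfl
  have hμbC : μ b ∈ C := (hC.1 a (μ b) hab).resolve_left haC
  exact hμcC ((hC.1 b (μ c) hbc).resolve_left fun hbC => hnot b hb ⟨hbC, hμbC⟩)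

/-- If `t` and `μ t` both lie in a minimal cover `D`, they have neighbours `μ j` and `l` outside
`D`; transitivity along `l — μ t`, `t — μ j` gives the uncovered edge `l — μ j`. -/
theorem isUnmixed_of_isMatchingTransitive (htrans : IsMatchingTransitive G N μ) :
    IsUnmixed G := by
  suffices hcard : ∀ D, IsMinimalVertexCover G D → #D = #N from
    fun C C' hC hC' => (hcard C hC).trans (hcard C' hC').symm
  intro D hD
  have hDN : D ⊆ N ∪ N.image μ := fun w hw =>
    h.mem_union_of_mem_support ((hD.exists_adj_notMem hw).imp fun _ hx => hx.1)
  refine (h.card_eq_iff hDN fun t ht => hD.1 t (μ t) (h.adj_apply t ht)).2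
    fun t ht ⟨htD, hμtD⟩ => ?_
  obtain ⟨w, htw, hwD⟩ := hD.exists_adj_notMem htD
  obtain ⟨l, hμtl, hlD⟩ := hD.exists_adj_notMem hμtD
  obtain ⟨j, hj, rfl⟩ := h.exists_apply_eq_of_adj ht htw
  have hl := h.mem_of_adj_apply ht hμtl
  rcases hD.1 l (μ j) (htrans l hl t ht j hj hμtl.symm htw) with hlD' | hμjD
  exacts [hlD hlD', hwD hμjD]

theorem isUnmixed_iff : IsUnmixed G ↔ IsMatchingTransitive G N μ :=
  ⟨fun hunm _ _ _ hb _ _ => h.adj_trans_of_isUnmixed hunm hb,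
    h.isUnmixed_of_isMatchingTransitive⟩

theorem mono (hle : G ≤ H) (hsupp : H.support ⊆ G.support) {X Y : Finset V}
    (hXY : IsBipartition H X Y) (hNX : N ⊆ X) : IsMatchedBipartite H N μ := by
  have hNY : N.image μ ⊆ Y := by
    intro w hw
    obtain ⟨a, ha, rfl⟩ := mem_image.1 hw
    rcases hXY.2.2 a (μ a) (hle (h.adj_apply a ha)) with ⟨-, hμa⟩ | ⟨haY, -⟩
    exacts [hμa, absurd haY (disjoint_left.1 hXY.1 (hNX ha))]
  refine ⟨h.injOn, h.disjoint, fun a ha => hle (h.adj_apply a ha), fun u v huv => ?_⟩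
  have hu := h.mem_union_of_mem_support (hsupp ⟨v, huv⟩)
  have hv := h.mem_union_of_mem_support (hsupp ⟨u, huv.symm⟩)
  have hX : ∀ w ∈ N ∪ N.image μ, w ∈ X → w ∈ N := fun w hw hwX =>
    (mem_union.1 hw).resolve_right fun hw' => disjoint_left.1 hXY.1 hwX (hNY hw')
  have hY : ∀ w ∈ N ∪ N.image μ, w ∈ Y → w ∈ N.image μ := fun w hw hwY =>
    (mem_union.1 hw).resolve_left fun hw' => disjoint_left.1 hXY.1 (hNX hw') hwY
  rcases hXY.2.2 u v huv with ⟨huX, hvY⟩ | ⟨huY, hvX⟩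
  exacts [Or.inl ⟨hX u hu huX, hY v hv hvY⟩, Or.inr ⟨hY u hu huY, hX v hv hvX⟩]

theorem countIn_edgeExp_apply {U : Finset V} (hU : U ⊆ N) (p : V) {q : V} (hq : q ∈ N) :
    countIn U (edgeExp p (μ q)) = if p ∈ U then 1 else 0 := by
  rw [countIn_edgeExp, if_neg fun hμ => h.apply_notMem hq (hU hμ), add_zero]

theorem countIn_image_edgeExp_apply {U : Finset V} (hU : U ⊆ N) {p q : V} (hp : p ∈ N)
    (hq : q ∈ N) : countIn (U.image μ) (edgeExp p (μ q)) = if q ∈ U then 1 else 0 := by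
  have hpU : p ∉ U.image μ := fun hp' =>
    disjoint_left.1 h.disjoint hp (image_subset_image hU hp')
  rw [countIn_edgeExp, if_neg hpU, zero_add]
  exact if_congr (h.apply_mem_image_iff hU hq) rfl rfl

theorem countIn_sum_edgeExp {n : ℕ} {f g : Fin n → V} (hg : ∀ i, g i ∈ N) {U : Finset V}
    (hU : U ⊆ N) : countIn U (∑ i, edgeExp (f i) (μ (g i))) = #{i | f i ∈ U} := by
  simp [h.countIn_edgeExp_apply hU _ (hg _)]

theorem countIn_image_sum_edgeExp {n : ℕ} {f g : Fin n → V} (hf : ∀ i, f i ∈ N)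
    (hg : ∀ i, g i ∈ N) {U : Finset V} (hU : U ⊆ N) :
    countIn (U.image μ) (∑ i, edgeExp (f i) (μ (g i))) = #{i | g i ∈ U} := by
  simp [h.countIn_image_edgeExp_apply hU (hf _) (hg _)]

theorem exists_eq_sum_edgeExp {n : ℕ} {d : V →₀ ℕ} (hd : IsEdgeProduct G n d) :
    ∃ f g : Fin n → V, (∀ i, f i ∈ N) ∧ (∀ i, g i ∈ N) ∧
      (∀ i, G.Adj (f i) (μ (g i))) ∧ d = ∑ i, edgeExp (f i) (μ (g i)) := by
  obtain ⟨E, hE, rfl⟩ := hd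
  choose f hf g hg hfg hE using fun i => h.exists_edgeExp_eq (hE i)
  exact ⟨f, g, hf, hg, hfg, sum_congr rfl fun i _ => hE i⟩

theorem countIn_le_countIn_image {U : Finset V}
    (hU : IsUpClosed (fun p q => G.Adj p (μ q)) N U) {n : ℕ} {d : V →₀ ℕ}
    (hd : IsEdgeProduct G n d) : countIn U d ≤ countIn (U.image μ) d := by
  obtain ⟨f, g, hf, hg, hfg, rfl⟩ := h.exists_eq_sum_edgeExp hd
  rw [h.countIn_sum_edgeExp hg hU.1, h.countIn_image_sum_edgeExp hf hg hU.1]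
  exact card_le_card fun i => by simpa using fun hi => hU.2 _ hi _ (hg i) (hfg i)

theorem isEdgeProduct_of_countIn_le (htrans : IsMatchingTransitive G N μ) {n : ℕ}
    {f g : Fin n → V} (hf : ∀ i, f i ∈ N) (hg : ∀ i, g i ∈ N) {d : V →₀ ℕ}
    (hd : d = ∑ i, edgeExp (f i) (μ (g i)))
    (hcount : ∀ U, IsUpClosed (fun p q => G.Adj p (μ q)) N U →
      countIn U d ≤ countIn (U.image μ) d) :
    IsEdgeProduct G n d := by
  obtain ⟨σ, hσ⟩ := exists_perm_forall_rel_of_card_le h.adj_apply htrans hf hg fun U hU => by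
    simpa only [hd, h.countIn_sum_edgeExp hg hU.1, h.countIn_image_sum_edgeExp hf hg hU.1]
      using hcount U hU
  refine ⟨fun i => (f i, μ (g (σ i))), hσ, ?_⟩
  simp only [hd, edgeExp, sum_add_distrib]
  rw [Equiv.sum_comp σ fun j => Finsupp.single (μ (g j)) 1]

/-- By `isEdgeProduct_of_countIn_le`, `edgeExp a (μ b) + d₀` is a product of edges iff
`[a ∈ U] + countIn U d₀ ≤ [b ∈ U] + countIn (U.image μ) d₀` for every up-set `U`, a
condition that is transitive in `(a, b)` because `countIn U d₀ ≤ countIn (U.image μ) d₀`. -/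
theorem isEdgeProduct_add_trans (htrans : IsMatchingTransitive G N μ) {s : ℕ}
    {d₀ : V →₀ ℕ} (hd₀ : IsEdgeProduct G s d₀) {a b c : V} (ha : a ∈ N) (hb : b ∈ N)
    (hc : c ∈ N) (hab : IsEdgeProduct G (s + 1) (edgeExp a (μ b) + d₀))
    (hbc : IsEdgeProduct G (s + 1) (edgeExp b (μ c) + d₀)) :
    IsEdgeProduct G (s + 1) (edgeExp a (μ c) + d₀) := by
  obtain ⟨f, g, hf, hg, -, hd₀eq⟩ := h.exists_eq_sum_edgeExp hd₀
  let f' : Fin (s + 1) → V := Fin.cons a f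
  let g' : Fin (s + 1) → V := Fin.cons c g
  refine h.isEdgeProduct_of_countIn_le htrans (f := f') (g := g')
    (Fin.forall_fin_succ.2 ⟨ha, hf⟩) (Fin.forall_fin_succ.2 ⟨hc, hg⟩)
    (by simp [f', g', Fin.sum_univ_succ, hd₀eq]) fun U hU => ?_
  have h₀ := h.countIn_le_countIn_image hU hd₀
  have h₁ := h.countIn_le_countIn_image hU hab
  have h₂ := h.countIn_le_countIn_image hU hbc
  simp only [map_add, h.countIn_edgeExp_apply hU.1 _ hb, h.countIn_edgeExp_apply hU.1 _ hc,
    h.countIn_image_edgeExp_apply hU.1 ha hb, h.countIn_image_edgeExp_apply hU.1 hb hc,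
    h.countIn_image_edgeExp_apply hU.1 ha hc] at h₁ h₂ ⊢
  split_ifs at h₁ h₂ ⊢ <;> omega

end IsMatchedBipartite

end MatchedBipartite

theorem isUnmixed_colon_general (k : Type) [Field k] {V : Type}
    (G G' : SimpleGraph V) (hbip : IsBipartite G) (hunm : IsUnmixed G)
    (s : ℕ) (e : Fin s → V × V) (he : ∀ i, G.Adj (e i).1 (e i).2)
    (hG' : edgeIdeal k G' =
      Submodule.colon ((edgeIdeal k G) ^ (s + 1))
        (Ideal.span {∏ i, (X (e i).1 * X (e i).2 : MvPolynomial V k)})) :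
    IsUnmixed G' ∧ IsBipartite G' := by
  classical
  obtain ⟨X, Y, hXY⟩ := hbip
  have hd₀ : IsEdgeProduct G s (∑ i, edgeExp (e i).1 (e i).2) := ⟨e, he, rfl⟩
  rw [prod_X_mul_X_eq_monomial] at hG'
  have hadj := adj_iff_isEdgeProduct_of_edgeIdeal_eq_colon k hd₀.degree_eq hG'
  have hXY' : IsBipartition G' X Y := hXY.of_isEdgeProduct_add hd₀ fun u v => (hadj u v).1
  obtain ⟨μ, hμ⟩ := hXY.exists_isMatchedBipartite hunm
  have hμ' : IsMatchedBipartite G' (nonIsolated G X) μ :=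
    hμ.mono (fun u v huv => (hadj u v).2 (hd₀.cons huv))
      (fun u ⟨v, huv⟩ => ((hadj u v).1 huv).mem_support (by simp [edgeExp]))
      hXY' fun _ ha => (mem_nonIsolated.1 ha).1
  refine ⟨hμ'.isUnmixed_iff.2 fun a ha b hb c hc hab hbc => ?_, X, Y, hXY'⟩
  rw [hadj] at hab hbc ⊢
  exact hμ.isEdgeProduct_add_trans (hμ.isUnmixed_iff.1 hunm) hd₀ ha hb hc hab hbc

/-- If `G` is an unmixed bipartite graph, then for every `s ≥ 1`
and every `s`-fold product `e 0 ⋯ e (s-1)` of edges of `G` (not necessarily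
distinct), the graph `G'` associated to the colon ideal
`(I(G)^(s+1) : e 0 ⋯ e (s-1))` (the simple graph, on the same vertex set, whose
edge ideal is this colon ideal) is also an unmixed bipartite graph. -/
theorem isUnmixed_colon (k : Type) [Field k] {V : Type} [Fintype V] [DecidableEq V]
    (G G' : SimpleGraph V) (hbip : IsBipartite G) (hunm : IsUnmixed G)
    (s : ℕ) (hs : 1 ≤ s) (e : Fin s → V × V) (he : ∀ i, G.Adj (e i).1 (e i).2)
    (hG' : edgeIdeal k G' =
      Submodule.colon ((edgeIdeal k G) ^ (s + 1))
        (Ideal.span {∏ i, (X (e i).1 * X (e i).2 : MvPolynomial V k)})) :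
    IsUnmixed G' ∧ IsBipartite G' :=
  isUnmixed_colon_general k G G' hbip hunm s e he hG'

end RegPowers
end
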